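/- arXiv:2308.05450 — 8 statements merged into one kernel-verified Lean document; each statement's English description precedes it below -/
import Mathlib

section
/- Let n be a positive integer and let V_1, ..., V_m be complex n×n matrices that mutually commute (V_α V_β = V_β V_α for all α, β) and satisfy the normalization condition V_1* V_1 + ... + V_m* V_m = Id, where V* denotes the conjugate transpose. Then every V_α is normal, i.e., V_α V_α* = V_α* V_α for each α. -/
/-!
Put `g z = ∑ β, ‖V_β* z‖² = ⟪z, (∑ β, V_β V_β*) z⟫`. Expanding with commutativity and
`∑ α, V_α* V_α = 1` gives `∑ α β, ‖[V_β*, V_α] y‖² = ∑ α, g (V_α y) - g y`, while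
`∑ α, ‖V_α y‖² = ‖y‖²`. So if `g ≤ c ‖·‖²` and `g y = c ‖y‖²`, every commutator `[V_β*, V_α]`
kills `y`. Taking for `y` a unit vector maximizing `g` (finite dimension), the case `α = β` gives
`g y = ∑ β, ‖V_β y‖² = 1`, i.e. `g ≤ ‖·‖²`. Since `‖V‖_HS = ‖V*‖_HS`, the sum of `g` over an
orthonormal basis equals its dimension, so `g = ‖·‖²` on that basis, and the same argument
kills all the commutators on it: the `V_α` and `V_β*` commute.
-/

section StarRing

variable {R ι : Type*} [Ring R] [StarRing R] [Fintype ι] {V : ι → R}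

theorem star_lie_mul_lie_of_commute {a b : R} (hab : Commute a b) :
    star ⁅star b, a⁆ * ⁅star b, a⁆ =
      star a * (b * star b) * a - star a * a * (b * star b) - b * star b * (star a * a)
        + b * (star a * a) * star b := by
  have hba : b * (a * star b) = a * (b * star b) := by
    rw [← mul_assoc, ← hab.eq, mul_assoc]
  have hstar : star a * (star b * a) = star b * (star a * a) := by
    rw [← mul_assoc, ← star_mul, ← hab.eq, star_mul, mul_assoc]
  simp only [Ring.lie_def, star_sub, star_mul, star_star, mul_sub, sub_mul, mul_assoc, hba, hstar]
  abel

theorem sum_star_lie_mul_lie (hcomm : ∀ α β, Commute (V α) (V β))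
    (hnorm : ∑ α, star (V α) * V α = 1) :
    ∑ α, ∑ β, star ⁅star (V β), V α⁆ * ⁅star (V β), V α⁆ =
      ∑ α, star (V α) * (∑ β, V β * star (V β)) * V α - ∑ β, V β * star (V β) := by
  simp only [star_lie_mul_lie_of_commute (hcomm _ _), Finset.sum_add_distrib,
    Finset.sum_sub_distrib, ← Finset.mul_sum, ← Finset.sum_mul]
  rw [Finset.sum_comm (f := fun α β => V β * (star (V α) * V α) * star (V β))]
  simp only [← Finset.mul_sum, ← Finset.sum_mul, hnorm, one_mul, mul_one]
  abel

end StarRing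

open RCLike Metric
open scoped InnerProductSpace

section Normed

variable {𝕜 E : Type*} [RCLike 𝕜] [NormedAddCommGroup E] [NormedSpace 𝕜 E] [FiniteDimensional 𝕜 E]

theorem exists_norm_eq_one_forall_le_mul_norm_sq [Nontrivial E] {g : E → ℝ} (hg : Continuous g)
    (hsmul : ∀ (t : 𝕜) z, g (t • z) = ‖t‖ ^ 2 * g z) :
    ∃ y, ‖y‖ = 1 ∧ ∀ z, g z ≤ g y * ‖z‖ ^ 2 := by
  have : ProperSpace E := FiniteDimensional.proper_rclike 𝕜 E
  obtain ⟨y, hy, hmax⟩ := (isCompact_sphere (0 : E) 1).exists_isMaxOn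
    (Set.nonempty_coe_sort.mp (NormedSpace.sphere_nonempty_rclike 𝕜 zero_le_one)) hg.continuousOn
  refine ⟨y, by simpa using hy, fun z => ?_⟩
  rcases eq_or_ne z 0 with rfl | hz
  · simpa using (hsmul 0 0).le
  · have hu := hmax (show (‖z‖⁻¹ : 𝕜) • z ∈ sphere (0 : E) 1 by simpa using norm_smul_inv_norm hz)
    rw [Set.mem_ofPred_eq, hsmul, norm_inv, norm_algebraMap', norm_norm, inv_pow,
      inv_mul_le_iff₀ (by positivity)] at hu
    linarith

end Normed

section InnerProductSpace

variable {𝕜 E ι : Type*} [RCLike 𝕜] [NormedAddCommGroup E] [InnerProductSpace 𝕜 E]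
  [FiniteDimensional 𝕜 E] [Fintype ι]

theorem re_inner_star_mul_self_apply (A : E →ₗ[𝕜] E) (y : E) :
    re ⟪y, (star A * A) y⟫_𝕜 = ‖A y‖ ^ 2 := by
  rw [Module.End.mul_apply, LinearMap.star_eq_adjoint, LinearMap.adjoint_inner_right,
    inner_self_eq_norm_sq]

theorem re_inner_mul_star_self_apply (A : E →ₗ[𝕜] E) (y : E) :
    re ⟪y, (A * star A) y⟫_𝕜 = ‖star A y‖ ^ 2 := by
  simpa only [star_star] using re_inner_star_mul_self_apply (star A) y

variable {T : ι → E →ₗ[𝕜] E}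

theorem sum_norm_sq_apply_of_sum_star_mul_self_eq_one (hnorm : ∑ α, star (T α) * T α = 1)
    (y : E) : ∑ α, ‖T α y‖ ^ 2 = ‖y‖ ^ 2 := by
  have h := congrArg (fun X => re ⟪y, X y⟫_𝕜) hnorm
  simpa only [LinearMap.sum_apply, inner_sum, map_sum, re_inner_star_mul_self_apply,
    Module.End.one_apply, inner_self_eq_norm_sq] using h

theorem sum_sum_norm_sq_lie_apply (hcomm : ∀ α β, Commute (T α) (T β))
    (hnorm : ∑ α, star (T α) * T α = 1) (y : E) :
    ∑ α, ∑ β, ‖⁅star (T β), T α⁆ y‖ ^ 2 =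
      ∑ α, ∑ β, ‖star (T β) (T α y)‖ ^ 2 - ∑ β, ‖star (T β) y‖ ^ 2 := by
  have hconj : ∀ α, re ⟪y, (star (T α) * (∑ β, T β * star (T β)) * T α) y⟫_𝕜 =
      ∑ β, ‖star (T β) (T α y)‖ ^ 2 := fun α => by
    rw [Module.End.mul_apply, Module.End.mul_apply, LinearMap.star_eq_adjoint,
      LinearMap.adjoint_inner_right, LinearMap.sum_apply, inner_sum, map_sum]
    simp only [re_inner_mul_star_self_apply]
  have h := congrArg (fun X => re ⟪y, X y⟫_𝕜) (sum_star_lie_mul_lie hcomm hnorm)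
  simpa only [LinearMap.sub_apply, inner_sub_right, map_sub, LinearMap.sum_apply, inner_sum,
    map_sum, re_inner_star_mul_self_apply, re_inner_mul_star_self_apply, hconj] using h

theorem lie_star_apply_eq_zero_of_le (hcomm : ∀ α β, Commute (T α) (T β))
    (hnorm : ∑ α, star (T α) * T α = 1) {c : ℝ}
    (hle : ∀ z, ∑ β, ‖star (T β) z‖ ^ 2 ≤ c * ‖z‖ ^ 2) {y : E}
    (hy : c * ‖y‖ ^ 2 ≤ ∑ β, ‖star (T β) y‖ ^ 2) (α β : ι) :
    ⁅star (T β), T α⁆ y = 0 := by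
  have hsum : ∑ α, ∑ β, ‖⁅star (T β), T α⁆ y‖ ^ 2 ≤ 0 := calc
    _ = ∑ α, ∑ β, ‖star (T β) (T α y)‖ ^ 2 - ∑ β, ‖star (T β) y‖ ^ 2 :=
      sum_sum_norm_sq_lie_apply hcomm hnorm y
    _ ≤ ∑ α, c * ‖T α y‖ ^ 2 - c * ‖y‖ ^ 2 :=
      sub_le_sub (Finset.sum_le_sum fun α _ => hle _) hy
    _ = 0 := by rw [← Finset.mul_sum, sum_norm_sq_apply_of_sum_star_mul_self_eq_one hnorm, sub_self]
  have h : ‖⁅star (T β), T α⁆ y‖ ^ 2 ≤ 0 := calc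
    _ ≤ ∑ β, ‖⁅star (T β), T α⁆ y‖ ^ 2 :=
      Finset.single_le_sum (fun _ _ => by positivity) (Finset.mem_univ β)
    _ ≤ ∑ α, ∑ β, ‖⁅star (T β), T α⁆ y‖ ^ 2 :=
      Finset.single_le_sum (f := fun α => ∑ β, ‖⁅star (T β), T α⁆ y‖ ^ 2)
        (fun _ _ => by positivity) (Finset.mem_univ α)
    _ ≤ 0 := hsum
  simpa using h

theorem sum_norm_sq_star_apply_eq {κ : Type*} [Fintype κ] (b : OrthonormalBasis κ 𝕜 E)
    (A : E →ₗ[𝕜] E) : ∑ i, ‖star A (b i)‖ ^ 2 = ∑ i, ‖A (b i)‖ ^ 2 := by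
  have h := congrArg re (LinearMap.trace_mul_comm 𝕜 A (star A))
  simpa only [LinearMap.trace_eq_sum_inner _ b, map_sum, re_inner_star_mul_self_apply,
    re_inner_mul_star_self_apply] using h

theorem norm_sq_star_apply_eq_of_lie_apply_eq_zero {A : E →ₗ[𝕜] E} {y : E}
    (h : ⁅star A, A⁆ y = 0) : ‖star A y‖ ^ 2 = ‖A y‖ ^ 2 := by
  rw [Ring.lie_def, LinearMap.sub_apply, sub_eq_zero] at h
  rw [← re_inner_mul_star_self_apply, ← re_inner_star_mul_self_apply, h]

theorem sum_norm_sq_star_apply_le (hcomm : ∀ α β, Commute (T α) (T β))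
    (hnorm : ∑ α, star (T α) * T α = 1) (z : E) :
    ∑ β, ‖star (T β) z‖ ^ 2 ≤ ‖z‖ ^ 2 := by
  rcases subsingleton_or_nontrivial E with hE | hE
  · simp [Subsingleton.elim z 0]
  obtain ⟨y, hy, hmax⟩ := exists_norm_eq_one_forall_le_mul_norm_sq (𝕜 := 𝕜)
    (g := fun z => ∑ β, ‖star (T β) z‖ ^ 2)
    (continuous_finsetSum _ fun β _ => (LinearMap.continuous_of_finiteDimensional _).norm.pow 2)
    (fun t z => by simp only [map_smul, norm_smul, mul_pow, Finset.mul_sum])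
  have hmax_eq_one : ∑ β, ‖star (T β) y‖ ^ 2 = 1 := calc
    _ = ∑ β, ‖T β y‖ ^ 2 := Finset.sum_congr rfl fun β _ =>
      norm_sq_star_apply_eq_of_lie_apply_eq_zero
        (lie_star_apply_eq_zero_of_le hcomm hnorm hmax (by rw [hy, one_pow, mul_one]) β β)
    _ = 1 := by rw [sum_norm_sq_apply_of_sum_star_mul_self_eq_one hnorm, hy, one_pow]
  simpa only [hmax_eq_one, one_mul] using hmax z

theorem commute_star_of_commute_of_sum_star_mul_self_eq_one (hcomm : ∀ α β, Commute (T α) (T β))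
    (hnorm : ∑ α, star (T α) * T α = 1) (α β : ι) : Commute (star (T β)) (T α) := by
  let b := stdOrthonormalBasis 𝕜 E
  have hsum : ∑ i, ∑ β, ‖star (T β) (b i)‖ ^ 2 = ∑ i, ‖b i‖ ^ 2 := by
    simp_rw [← sum_norm_sq_apply_of_sum_star_mul_self_eq_one hnorm (b _)]
    rw [Finset.sum_comm, Finset.sum_comm (f := fun i β => ‖T β (b i)‖ ^ 2)]
    exact Finset.sum_congr rfl fun β _ => sum_norm_sq_star_apply_eq b (T β)
  have hb : ∀ i, ∑ β, ‖star (T β) (b i)‖ ^ 2 = ‖b i‖ ^ 2 := fun i =>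
    (Finset.sum_eq_sum_iff_of_le fun i _ => sum_norm_sq_star_apply_le hcomm hnorm (b i)).mp
      hsum i (Finset.mem_univ i)
  rw [commute_iff_lie_eq]
  refine b.toBasis.ext fun i => ?_
  rw [OrthonormalBasis.coe_toBasis, LinearMap.zero_apply]
  exact lie_star_apply_eq_zero_of_le hcomm hnorm (c := 1)
    (by simpa only [one_mul] using sum_norm_sq_star_apply_le hcomm hnorm)
    (by rw [one_mul, hb i]) α β

end InnerProductSpace

open Matrix

theorem commuting_kraus_normal_general (n m : ℕ)
    (V : Fin m → Matrix (Fin n) (Fin n) ℂ)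
    (hcomm : ∀ α β, V α * V β = V β * V α)
    (hnorm : ∑ α, (V α)ᴴ * V α = 1) :
    ∀ α, V α * (V α)ᴴ = (V α)ᴴ * V α := by
  let φ := (LinearMap.toMatrixOrthonormal (EuclideanSpace.basisFun (Fin n) ℂ)).symm
  intro α
  have h := commute_star_of_commute_of_sum_star_mul_self_eq_one (T := fun α => φ (V α))
    (fun α β => Commute.map (hcomm α β) φ)
    (by simp only [← map_star, ← map_mul, ← map_sum, star_eq_conjTranspose, hnorm, map_one]) α α
  simpa only [map_star, StarAlgEquiv.symm_apply_apply, star_eq_conjTranspose] using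
    (h.map φ.symm).eq.symm

/-- Commuting Kraus operators on a finite-dimensional space are normal. -/
theorem commuting_kraus_normal (n m : ℕ) (hn : 0 < n)
    (V : Fin m → Matrix (Fin n) (Fin n) ℂ)
    (hcomm : ∀ α β, V α * V β = V β * V α)
    (hnorm : ∑ α, (V α)ᴴ * V α = 1) :
    ∀ α, V α * (V α)ᴴ = (V α)ᴴ * V α :=
  commuting_kraus_normal_general n m V hcomm hnorm
end

section
/- Let V_1, ..., V_m be complex n×n matrices that mutually commute and satisfy V_1* V_1 + ... + V_m* V_m = Id. Then the matrices are simultaneously unitarily diagonalizable: there exists a unitary matrix U and diagonal matrices D_1, ..., D_m such that V_α = U D_α U* for every α. -/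
/-!
Choose a unit vector `u` that is a common eigenvector of the adjoints `V_α*`. Its orthogonal
complement `W` is invariant under every `V_α`, and the identity `∑ ⟪V_α x, V_α y⟫ = ⟪x, y⟫`
restricts to `W`, so by induction on the dimension `W` has an orthonormal basis of common
eigenvectors `e_k`, say `V_α e_k = a_α e_k`. It remains to see that `u` is a common eigenvector
of the `V_α`, i.e. that `x_α = ⟪e_k, V_α u⟫` vanishes for each `k`. Put `b_α = ⟪u, V_α u⟫`.
Expanding `⟪e_k, V_α V_β u⟫` and using `V_α V_β = V_β V_α` shows that `b - a` is parallel to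
`x` in `ℂ^m`, while `∑ V_α* V_α = 1` gives `‖a‖ = 1`, `a ⊥ x` and `‖b‖² + ‖x‖² ≤ 1`.
If `x ≠ 0` then also `a ⊥ b - a`, so `‖b‖² = 1 + ‖b - a‖² ≥ 1`, which forces `x = 0` anyway.
-/

open Module Matrix
open scoped InnerProductSpace ComplexConjugate

theorem Module.End.exists_common_eigenvector {K V ι : Type*} [Field K] [IsAlgClosed K]
    [AddCommGroup V] [Module K V] [FiniteDimensional K V] [Nontrivial V]
    (f : ι → End K V) (hf : ∀ i j, Commute (f i) (f j)) :
    ∃ v : V, v ≠ 0 ∧ ∀ i, ∃ μ : K, f i v = μ • v := by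
  induction hd : finrank K V using Nat.strong_induction_on generalizing V with
  | _ d ih =>
  by_cases hscalar : ∀ i, ∃ μ : K, f i = μ • 1
  · obtain ⟨v, hv⟩ := exists_ne (0 : V)
    exact ⟨v, hv, fun i => (hscalar i).imp fun μ hμ => by simp [hμ]⟩
  push Not at hscalar
  obtain ⟨i₀, hi₀⟩ := hscalar
  obtain ⟨μ, hμ⟩ := Module.End.exists_eigenvalue (f i₀)
  set E := (f i₀).eigenspace μ
  have : Nontrivial E := Submodule.nontrivial_iff_ne_bot.mpr hμ
  have hE : E ≠ ⊤ := fun h => hi₀ μ <| LinearMap.ext fun v =>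
    Module.End.mem_eigenspace_iff.mp (h ▸ Submodule.mem_top : v ∈ E)
  have hmaps : ∀ i, Set.MapsTo (f i) E E := fun i =>
    Module.End.mapsTo_genEigenspace_of_comm (hf i₀ i) μ 1
  obtain ⟨v, hv, hvμ⟩ := ih (finrank K E) (hd ▸ Submodule.finrank_lt hE)
    (fun i => (f i).restrict (hmaps i))
    (fun i j => LinearMap.restrict_commute (hf i j) (hmaps i) (hmaps j)) rfl
  exact ⟨v, by simpa using hv, fun i => (hvμ i).imp fun ν h => congrArg Subtype.val h⟩

theorem EuclideanSpace.eq_zero_of_sub_parallel {ι : Type*} [Fintype ι]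
    {a b x : EuclideanSpace ℂ ι} (ha : ‖a‖ = 1) (hax : ⟪a, x⟫_ℂ = 0)
    (hbx : ‖b‖ ^ 2 + ‖x‖ ^ 2 ≤ 1) (hpar : ∀ α β, (b α - a α) * x β = (b β - a β) * x α) :
    x = 0 := by
  by_contra hx
  obtain ⟨β, hβ⟩ : ∃ β, x β ≠ 0 := by
    by_contra! h
    exact hx (PiLp.ext h)
  have had : ⟪a, b - a⟫_ℂ = 0 := by
    refine (mul_eq_zero.mp ?_).resolve_right hβ
    calc ⟪a, b - a⟫_ℂ * x β = ∑ α, conj (a α) * ((b α - a α) * x β) := by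
          simp only [PiLp.inner_apply, RCLike.inner_apply, Finset.sum_mul, PiLp.sub_apply]
          exact Finset.sum_congr rfl fun α _ => by ring
      _ = (b β - a β) * ⟪a, x⟫_ℂ := by
          simp only [PiLp.inner_apply, RCLike.inner_apply, Finset.mul_sum]
          exact Finset.sum_congr rfl fun α _ => by rw [hpar]; ring
      _ = 0 := by rw [hax, mul_zero]
  have hb : ‖b‖ * ‖b‖ = ‖a‖ * ‖a‖ + ‖b - a‖ * ‖b - a‖ := by
    rw [← norm_add_sq_eq_norm_sq_add_norm_sq_of_inner_eq_zero a (b - a) had, add_sub_cancel]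
  have : 0 < ‖x‖ := norm_pos_iff.mpr hx
  nlinarith [mul_self_nonneg ‖b - a‖]

section InnerProductSpace

variable {𝕜 E : Type*} [RCLike 𝕜] [NormedAddCommGroup E] [InnerProductSpace 𝕜 E]

theorem OrthonormalBasis.inner_apply_eq_mul_inner {κ : Type*} [Fintype κ]
    (e : OrthonormalBasis κ 𝕜 E) {T : E →ₗ[𝕜] E} {a : κ → 𝕜} (hT : ∀ k, T (e k) = a k • e k)
    (k : κ) (x : E) : ⟪e k, T x⟫_𝕜 = a k * ⟪e k, x⟫_𝕜 := by
  classical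
  conv_lhs => rw [← e.sum_repr' x]
  simp [map_sum, map_smul, hT, inner_sum, inner_smul_right, e.inner_eq_ite, mul_comm]

theorem LinearMap.mapsTo_orthogonal_span_singleton_of_adjoint_apply [FiniteDimensional 𝕜 E]
    (T : E →ₗ[𝕜] E) {u : E} {c : 𝕜} (h : T.adjoint u = c • u) :
    Set.MapsTo T (𝕜 ∙ u)ᗮ (𝕜 ∙ u)ᗮ := by
  intro w hw
  rw [SetLike.mem_coe, Submodule.mem_orthogonal_singleton_iff_inner_right] at hw ⊢
  rw [← LinearMap.adjoint_inner_left, h, inner_smul_left, hw, mul_zero]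

theorem sub_inner_smul_mem_orthogonal_span_singleton {u : E} (hu : ‖u‖ = 1) (y : E) :
    y - ⟪u, y⟫_𝕜 • u ∈ (𝕜 ∙ u)ᗮ := by
  rw [Submodule.mem_orthogonal_singleton_iff_inner_right, inner_sub_right, inner_smul_right,
    inner_self_eq_norm_sq_to_K, hu]
  simp

noncomputable def OrthonormalBasis.consOrthogonalSpanSingleton {k : ℕ} {u : E} (hu : ‖u‖ = 1)
    (e : OrthonormalBasis (Fin k) 𝕜 (𝕜 ∙ u)ᗮ) : OrthonormalBasis (Fin (k + 1)) 𝕜 E :=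
  OrthonormalBasis.mk (v := Matrix.vecCons u fun i => (e i : E))
    (orthonormal_vecCons_iff.mpr ⟨hu,
      fun i => Submodule.mem_orthogonal_singleton_iff_inner_right.mp (e i).2,
      e.orthonormal.comp_linearIsometry (𝕜 ∙ u)ᗮ.subtypeₗᵢ⟩) <| by
    intro y _
    set w : (𝕜 ∙ u)ᗮ := ⟨_, sub_inner_smul_mem_orthogonal_span_singleton hu y⟩
    refine (Submodule.mem_span_range_iff_exists_fun 𝕜).mpr
      ⟨Matrix.vecCons ⟪u, y⟫_𝕜 fun i => ⟪e i, w⟫_𝕜, ?_⟩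
    have hw : ∑ i, ⟪(e i : E), w⟫_𝕜 • (e i : E) = w := by
      simpa using congrArg Subtype.val (e.sum_repr' w)
    simp [Fin.sum_univ_succ, hw, w]

theorem OrthonormalBasis.coe_consOrthogonalSpanSingleton {k : ℕ} {u : E} (hu : ‖u‖ = 1)
    (e : OrthonormalBasis (Fin k) 𝕜 (𝕜 ∙ u)ᗮ) :
    ⇑(consOrthogonalSpanSingleton hu e) = Matrix.vecCons u fun i => (e i : E) :=
  OrthonormalBasis.coe_mk _ _

end InnerProductSpace

section Kraus

variable {E ι κ : Type*} [NormedAddCommGroup E] [InnerProductSpace ℂ E]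

theorem sum_norm_sq_apply_eq [Fintype ι] {f : ι → E →ₗ[ℂ] E}
    (hK : ∀ x y, ∑ α, ⟪f α x, f α y⟫_ℂ = ⟪x, y⟫_ℂ) (x : E) : ∑ α, ‖f α x‖ ^ 2 = ‖x‖ ^ 2 := by
  have := hK x x
  simp only [inner_self_eq_norm_sq_to_K] at this
  exact_mod_cast this

theorem sum_norm_inner_sq_add_le_one [Fintype ι] {f : ι → E →ₗ[ℂ] E}
    (hK : ∀ x y, ∑ α, ⟪f α x, f α y⟫_ℂ = ⟪x, y⟫_ℂ) {u v : E} (huv : Orthonormal ℂ ![u, v]) :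
    ∑ α, (‖⟪u, f α u⟫_ℂ‖ ^ 2 + ‖⟪v, f α u⟫_ℂ‖ ^ 2) ≤ 1 := by
  calc _ ≤ ∑ α, ‖f α u‖ ^ 2 := Finset.sum_le_sum fun α _ => by
        simpa [Fin.sum_univ_two] using huv.sum_inner_products_le (s := .univ) (x := f α u)
    _ = 1 := by rw [sum_norm_sq_apply_eq hK u, show ‖u‖ = 1 by simpa using huv.norm_eq_one 0,
        one_pow]

variable {f : ι → E →ₗ[ℂ] E} {u : E}

theorem sub_mul_inner_eq_sub_mul_inner [Fintype κ] (hf : ∀ α β, Commute (f α) (f β))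
    (hu : ‖u‖ = 1) (hW : ∀ α, Set.MapsTo (f α) (ℂ ∙ u)ᗮ (ℂ ∙ u)ᗮ)
    (e : OrthonormalBasis κ ℂ (ℂ ∙ u)ᗮ)
    {a : ι → κ → ℂ} (he : ∀ α k, f α (e k) = a α k • (e k : E)) (k : κ) (α β : ι) :
    (⟪u, f α u⟫_ℂ - a α k) * ⟪(e k : E), f β u⟫_ℂ =
      (⟪u, f β u⟫_ℂ - a β k) * ⟪(e k : E), f α u⟫_ℂ := by
  have heu : ⟪(e k : E), u⟫_ℂ = 0 :=
    Submodule.mem_orthogonal_singleton_iff_inner_left.mp (e k).2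
  -- `f β u` is `⟪u, f β u⟫ u` plus a vector of `(ℂ ∙ u)ᗮ`, on which `⟪e k, f α ·⟫ = a α k ⟪e k, ·⟫`
  have hcomp : ∀ α β, ⟪(e k : E), f α (f β u)⟫_ℂ =
      ⟪u, f β u⟫_ℂ * ⟪(e k : E), f α u⟫_ℂ + a α k * ⟪(e k : E), f β u⟫_ℂ := by
    intro α β
    have : ⟪(e k : E), f α (f β u - ⟪u, f β u⟫_ℂ • u)⟫_ℂ =
        a α k * ⟪(e k : E), f β u - ⟪u, f β u⟫_ℂ • u⟫_ℂ :=
      e.inner_apply_eq_mul_inner (T := (f α).restrict (hW α)) (fun k => Subtype.ext (he α k))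
        k ⟨_, sub_inner_smul_mem_orthogonal_span_singleton hu (f β u)⟩
    rw [map_sub, map_smul, inner_sub_right, inner_sub_right, inner_smul_right, inner_smul_right,
      heu] at this
    linear_combination this
  have := hcomp α β
  rw [← Module.End.mul_apply, hf α β, Module.End.mul_apply, hcomp β α] at this
  linear_combination this

theorem inner_apply_eq_zero_of_orthogonal_eigenbasis [Fintype ι] [Fintype κ]
    (hf : ∀ α β, Commute (f α) (f β))
    (hK : ∀ x y, ∑ α, ⟪f α x, f α y⟫_ℂ = ⟪x, y⟫_ℂ) (hu : ‖u‖ = 1)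
    (hW : ∀ α, Set.MapsTo (f α) (ℂ ∙ u)ᗮ (ℂ ∙ u)ᗮ) (e : OrthonormalBasis κ ℂ (ℂ ∙ u)ᗮ)
    {a : ι → κ → ℂ} (he : ∀ α k, f α (e k) = a α k • (e k : E)) (k : κ) (α : ι) :
    ⟪(e k : E), f α u⟫_ℂ = 0 := by
  have heu : ⟪(e k : E), u⟫_ℂ = 0 :=
    Submodule.mem_orthogonal_singleton_iff_inner_left.mp (e k).2
  have hek : ‖(e k : E)‖ = 1 := (Submodule.norm_coe (e k)).trans (e.norm_eq_one k)
  have ha : ‖WithLp.toLp 2 (a · k)‖ = 1 := by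
    rw [← pow_eq_one_iff_of_nonneg (norm_nonneg _) two_ne_zero, EuclideanSpace.norm_sq_eq]
    simpa [he, norm_smul, mul_pow, hek] using sum_norm_sq_apply_eq hK (e k : E)
  have hax : ⟪WithLp.toLp 2 (a · k), WithLp.toLp 2 fun α => ⟪(e k : E), f α u⟫_ℂ⟫_ℂ = 0 := by
    simpa [he, inner_smul_left, heu, PiLp.inner_apply, mul_comm] using hK (e k) u
  have hbx : ‖WithLp.toLp 2 fun α => ⟪u, f α u⟫_ℂ‖ ^ 2 +
      ‖WithLp.toLp 2 fun α => ⟪(e k : E), f α u⟫_ℂ‖ ^ 2 ≤ 1 := by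
    rw [EuclideanSpace.norm_sq_eq, EuclideanSpace.norm_sq_eq, ← Finset.sum_add_distrib]
    exact sum_norm_inner_sq_add_le_one hK <|
      orthonormal_vecCons_iff.mpr ⟨hu, Fin.forall_fin_one.mpr (inner_eq_zero_symm.mp heu),
        orthonormal_vecCons_iff.mpr ⟨hek, finZeroElim, .of_isEmpty _⟩⟩
  have := EuclideanSpace.eq_zero_of_sub_parallel ha hax hbx
    (sub_mul_inner_eq_sub_mul_inner hf hu hW e he k)
  simpa using congrArg (· α) this

theorem apply_eq_inner_smul_of_orthogonal_eigenbasis [Fintype ι] [Fintype κ]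
    (hf : ∀ α β, Commute (f α) (f β))
    (hK : ∀ x y, ∑ α, ⟪f α x, f α y⟫_ℂ = ⟪x, y⟫_ℂ) (hu : ‖u‖ = 1)
    (hW : ∀ α, Set.MapsTo (f α) (ℂ ∙ u)ᗮ (ℂ ∙ u)ᗮ) (e : OrthonormalBasis κ ℂ (ℂ ∙ u)ᗮ)
    {a : ι → κ → ℂ} (he : ∀ α k, f α (e k) = a α k • (e k : E)) (α : ι) :
    f α u = ⟪u, f α u⟫_ℂ • u := by
  set w : (ℂ ∙ u)ᗮ := ⟨_, sub_inner_smul_mem_orthogonal_span_singleton hu (f α u)⟩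
  have hw : w = 0 := by
    rw [← e.sum_repr' w]
    refine Finset.sum_eq_zero fun k _ => ?_
    have heu : ⟪(e k : E), u⟫_ℂ = 0 :=
      Submodule.mem_orthogonal_singleton_iff_inner_left.mp (e k).2
    simp [w, inner_sub_right, inner_smul_right, heu,
      inner_apply_eq_zero_of_orthogonal_eigenbasis hf hK hu hW e he k α]
  exact sub_eq_zero.mp (congrArg Subtype.val hw)

theorem exists_orthonormalBasis_common_eigenvectors [Fintype ι] [FiniteDimensional ℂ E]
    (hf : ∀ α β, Commute (f α) (f β)) (hK : ∀ x y, ∑ α, ⟪f α x, f α y⟫_ℂ = ⟪x, y⟫_ℂ) :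
    ∃ (d : ℕ) (b : OrthonormalBasis (Fin d) ℂ E) (μ : ι → Fin d → ℂ),
      ∀ α i, f α (b i) = μ α i • b i := by
  induction hd : finrank ℂ E generalizing E with
  | zero =>
    exact ⟨0, (stdOrthonormalBasis ℂ E).reindex (finCongr hd), fun _ => Fin.elim0,
      fun _ i => i.elim0⟩
  | succ d ih =>
    have : Nontrivial E := Module.nontrivial_of_finrank_eq_succ hd
    have : Fact (finrank ℂ E = d + 1) := ⟨hd⟩
    obtain ⟨v, hv, hμ⟩ := Module.End.exists_common_eigenvector (fun α => (f α).adjoint)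
      fun α β => by simpa only [LinearMap.star_eq_adjoint] using (hf α β).star_star
    set u := (‖v‖⁻¹ : ℂ) • v
    have hu : ‖u‖ = 1 := norm_smul_inv_norm hv
    have hW : ∀ α, Set.MapsTo (f α) (ℂ ∙ u)ᗮ (ℂ ∙ u)ᗮ := fun α =>
      have ⟨μ, h⟩ := hμ α
      (f α).mapsTo_orthogonal_span_singleton_of_adjoint_apply (c := μ)
        (by rw [map_smul, h, smul_comm])
    obtain ⟨k, e, a, he⟩ := ih (f := fun α => (f α).restrict (hW α))
      (fun α β => LinearMap.restrict_commute (hf α β) (hW α) (hW β))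
      (fun x y => hK x y)
      (Submodule.finrank_orthogonal_span_singleton (norm_ne_zero_iff.mp (hu ▸ one_ne_zero)))
    have he' : ∀ α i, f α (e i) = a α i • (e i : E) := fun α i => congrArg Subtype.val (he α i)
    refine ⟨k + 1, .consOrthogonalSpanSingleton hu e,
      fun α => Matrix.vecCons ⟪u, f α u⟫_ℂ (a α), fun α i => ?_⟩
    rw [OrthonormalBasis.coe_consOrthogonalSpanSingleton]
    refine Fin.cases ?_ (fun i => ?_) i
    · simpa using apply_eq_inner_smul_of_orthogonal_eigenbasis hf hK hu hW e he' α
    · simpa using he' α i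

end Kraus

theorem Matrix.sum_inner_toEuclideanLin {n ι : Type*} [Fintype n] [DecidableEq n] [Fintype ι]
    {V : ι → Matrix n n ℂ} (hV : ∑ α, (V α)ᴴ * V α = 1) (x y : EuclideanSpace ℂ n) :
    ∑ α, ⟪(V α).toEuclideanLin x, (V α).toEuclideanLin y⟫_ℂ = ⟪x, y⟫_ℂ := by
  simp_rw [← LinearMap.adjoint_inner_right, ← toEuclideanLin_conjTranspose_eq_adjoint,
    ← inner_sum, toLpLin_apply, mulVec_mulVec]
  rw [← WithLp.toLp_sum, ← Matrix.sum_mulVec, hV, one_mulVec]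

theorem Matrix.mul_toMatrix_eq_toMatrix_mul_diagonal {𝕜 n : Type*} [RCLike 𝕜] [Fintype n]
    [DecidableEq n] {A : Matrix n n 𝕜} (b : OrthonormalBasis n 𝕜 (EuclideanSpace 𝕜 n))
    {μ : n → 𝕜} (h : ∀ i, A *ᵥ b i = μ i • b i) :
    A * (EuclideanSpace.basisFun n 𝕜).toBasis.toMatrix b.toBasis =
      (EuclideanSpace.basisFun n 𝕜).toBasis.toMatrix b.toBasis * diagonal μ := by
  ext i j
  rw [mul_diagonal, mul_comm]
  simpa [Matrix.mul_apply, mulVec, dotProduct, Basis.toMatrix_apply] using congrFun (h j) i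

/-- Commuting Kraus operators are simultaneously unitarily diagonalizable. -/
theorem commuting_kraus_simultaneously_diagonalizable (n m : ℕ)
    (V : Fin m → Matrix (Fin n) (Fin n) ℂ)
    (hcomm : ∀ α β, V α * V β = V β * V α)
    (hnorm : ∑ α, (V α)ᴴ * V α = 1) :
    ∃ U : Matrix (Fin n) (Fin n) ℂ, Uᴴ * U = 1 ∧
      ∃ D : Fin m → Matrix (Fin n) (Fin n) ℂ,
        (∀ α, (D α).IsDiag) ∧ ∀ α, V α = U * D α * Uᴴ := by
  obtain ⟨d, b, μ, hb⟩ := exists_orthonormalBasis_common_eigenvectors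
    (f := fun α => (V α).toEuclideanLin)
    (fun α β => by
      simpa only [Commute, SemiconjBy, Module.End.mul_eq_comp, toLpLin_mul_same] using
        congrArg toEuclideanLin (hcomm α β))
    (Matrix.sum_inner_toEuclideanLin hnorm)
  obtain rfl : d = n := by simpa using (finrank_eq_card_basis b.toBasis).symm
  set U := (EuclideanSpace.basisFun (Fin d) ℂ).toBasis.toMatrix b.toBasis
  have hU : U ∈ unitaryGroup (Fin d) ℂ :=
    (EuclideanSpace.basisFun (Fin d) ℂ).toMatrix_orthonormalBasis_mem_unitary b
  refine ⟨U, mem_unitaryGroup_iff'.mp hU, fun α => diagonal (μ α), fun α => isDiag_diagonal _,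
    fun α => ?_⟩
  have hVU : V α * U = U * diagonal (μ α) :=
    mul_toMatrix_eq_toMatrix_mul_diagonal b fun i => congrArg WithLp.ofLp (hb α i)
  rw [← hVU, Matrix.mul_assoc, ← star_eq_conjTranspose, mem_unitaryGroup_iff.mp hU,
    Matrix.mul_one]
end

section
/- Let V_1, ..., V_m be complex n×n matrices satisfying V_1* V_1 + ... + V_m* V_m = Id. Then the following are equivalent: (i) there exists a Hermitian n×n matrix N and functions f_1, ..., f_m : ℝ → ℂ such that V_α = f_α(N) for every α (where f_α(N) is defined via the functional calculus / spectral decomposition of N); (ii) the matrices V_1, ..., V_m mutually commute. -/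
/-!
Commuting Kraus operators are simultaneously unitarily diagonalizable, by induction on the
dimension. Take a unit common eigenvector `ξ` of the adjoints; then `ξᗮ` is invariant, so by
induction it has an orthonormal basis of common eigenvectors `e j`, `V α (e j) = λ α j • e j`.
Fix `j` and put `l α = λ α j`, `b α = ⟪e j, V α ξ⟫`, `μ α = ⟪ξ, V α ξ⟫`. The Kraus identity gives
`‖l‖ = 1`, `⟪l, b⟫ = 0` and `‖μ‖² + ‖b‖² ≤ 1`, and commutation makes `μ - l` proportional to `b`.
Hence `⟪l, μ⟫ = 1`, so `‖μ‖ ≥ 1` by Cauchy–Schwarz, and `b = 0`. Thus `ξ` is itself a common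
eigenvector and the basis extends by `ξ`. A simultaneously diagonal family is `f α (N)` for any
`N` with the same eigenvectors and distinct real eigenvalues; conversely, functions of one
Hermitian matrix commute.
-/

open Matrix

/-- For a Hermitian matrix `N` with spectral decomposition `N = Σ_λ λ P_λ` and a function
`f : ℝ → ℂ`, the matrix `f(N) = Σ_λ f(λ) P_λ`, expressed through an orthonormal basis of
eigenvectors of `N`. -/
noncomputable def hermitianApply {n : ℕ} {N : Matrix (Fin n) (Fin n) ℂ}
    (hN : N.IsHermitian) (f : ℝ → ℂ) : Matrix (Fin n) (Fin n) ℂ :=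
  (hN.eigenvectorUnitary : Matrix (Fin n) (Fin n) ℂ) *
    Matrix.diagonal (fun i => f (hN.eigenvalues i)) *
      (hN.eigenvectorUnitary : Matrix (Fin n) (Fin n) ℂ)ᴴ

open scoped InnerProductSpace ComplexConjugate

namespace Module.End

theorem exists_common_eigenvector_s2 {K E ι : Type*} [Field K] [IsAlgClosed K]
    [AddCommGroup E] [Module K E] [FiniteDimensional K E] [Nontrivial E]
    (f : ι → End K E) (hf : ∀ i j, Commute (f i) (f j)) :
    ∃ v ≠ 0, ∀ i, ∃ μ : K, f i v = μ • v := by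
  induction hd : finrank K E using Nat.strong_induction_on generalizing E with
  | _ d ih =>
  by_cases hscalar : ∀ i, ∃ μ : K, ∀ v, f i v = μ • v
  · obtain ⟨v, hv⟩ := exists_ne (0 : E)
    exact ⟨v, hv, fun i => (hscalar i).imp fun μ h => h v⟩
  push Not at hscalar
  obtain ⟨i, hi⟩ := hscalar
  obtain ⟨μ, hμ⟩ := exists_eigenvalue (f i)
  have hproper : eigenspace (f i) μ ≠ ⊤ := fun htop =>
    (hi μ).elim fun v hv => hv (mem_eigenspace_iff.mp (htop ▸ Submodule.mem_top))
  have : Nontrivial (eigenspace (f i) μ) := Submodule.nontrivial_iff_ne_bot.mpr hμ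
  have hmaps j := mapsTo_genEigenspace_of_comm (hf i j) μ 1
  obtain ⟨v, hv, hvμ⟩ := ih _ (hd ▸ Submodule.finrank_lt hproper)
    (fun j => (f j).restrict (hmaps j))
    (fun j k => LinearMap.restrict_commute (hf j k) _ _) rfl
  exact ⟨v, by simpa using hv, fun j => (hvμ j).imp fun ν h => congrArg Subtype.val h⟩

end Module.End

theorem eq_zero_of_sub_eq_smul_of_inner_eq_zero {𝕜 F : Type*} [RCLike 𝕜] [NormedAddCommGroup F]
    [InnerProductSpace 𝕜 F] {l μ b : F} (hl : ‖l‖ = 1) (hlb : ⟪l, b⟫_𝕜 = 0)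
    (hμb : ‖μ‖ ^ 2 + ‖b‖ ^ 2 ≤ 1) {c : 𝕜} (hc : μ - l = c • b) : b = 0 := by
  have hlμ : ⟪l, μ⟫_𝕜 = 1 := by
    rw [sub_eq_iff_eq_add.mp hc, inner_add_right, inner_smul_right, hlb, mul_zero, zero_add,
      inner_self_eq_norm_sq_to_K, hl]
    simp
  have hμ : 1 ≤ ‖μ‖ := by simpa [hlμ, hl] using norm_inner_le_norm (𝕜 := 𝕜) l μ
  have : ‖b‖ ^ 2 ≤ 0 := by nlinarith
  exact norm_eq_zero.mp (by nlinarith [norm_nonneg b])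

theorem eq_zero_or_exists_eq_smul_of_mul_eq_mul {ι K : Type*} [Field K] {d b : ι → K}
    (h : ∀ α β, d β * b α = d α * b β) : b = 0 ∨ ∃ c : K, d = c • b := by
  by_cases hb : b = 0
  · exact .inl hb
  obtain ⟨α, hα⟩ := Function.ne_iff.mp hb
  refine .inr ⟨d α / b α, funext fun β => ?_⟩
  rw [Pi.smul_apply, smul_eq_mul, div_mul_eq_mul_div, eq_div_iff hα, h]

theorem OrthonormalBasis.inner_apply_of_apply_eq_smul {𝕜 F κ : Type*} [RCLike 𝕜]
    [NormedAddCommGroup F] [InnerProductSpace 𝕜 F] [Fintype κ] (e : OrthonormalBasis κ 𝕜 F)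
    {T : F →ₗ[𝕜] F} {lam : κ → 𝕜} (h : ∀ k, T (e k) = lam k • e k) (j : κ) (w : F) :
    ⟪e j, T w⟫_𝕜 = lam j * ⟪e j, w⟫_𝕜 := by
  classical
  conv_lhs => rw [← e.sum_repr' w]
  simp [h, inner_sum, inner_smul_right, e.inner_eq_ite, mul_comm]

theorem OrthonormalBasis.exists_coe_eq_cons {𝕜 F : Type*} [RCLike 𝕜] [NormedAddCommGroup F]
    [InnerProductSpace 𝕜 F] [FiniteDimensional 𝕜 F] {ξ : F} (hξ : ‖ξ‖ = 1) {d : ℕ}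
    (e : OrthonormalBasis (Fin d) 𝕜 (𝕜 ∙ ξ)ᗮ) :
    ∃ b : OrthonormalBasis (Fin (d + 1)) 𝕜 F, ⇑b = Fin.cons ξ (fun j => (e j : F)) := by
  have hon : Orthonormal 𝕜 (Fin.cons ξ (fun j => (e j : F)) : Fin (d + 1) → F) := by
    change Orthonormal 𝕜 (Matrix.vecCons _ _)
    refine orthonormal_vecCons_iff.mpr
      ⟨hξ, fun j => ?_, e.orthonormal.comp_linearIsometry (𝕜 ∙ ξ)ᗮ.subtypeₗᵢ⟩
    exact Submodule.mem_orthogonal_singleton_iff_inner_right.mp (e j).2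
  have hcard : Fintype.card (Fin (d + 1)) = Module.finrank 𝕜 F := by
    rw [Fintype.card_fin, ← Submodule.finrank_add_finrank_orthogonal (𝕜 ∙ ξ),
      finrank_span_singleton (norm_ne_zero_iff.mp (hξ ▸ one_ne_zero)),
      Module.finrank_eq_card_basis e.toBasis, Fintype.card_fin, add_comm]
  exact ⟨(basisOfOrthonormalOfCardEqFinrank hon hcard).toOrthonormalBasis
    (by simpa using hon), by simp⟩

section KrausFamily

variable {E ι : Type*} [NormedAddCommGroup E] [InnerProductSpace ℂ E] {V : ι → E →ₗ[ℂ] E}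

theorem exists_norm_eq_one_inner_apply_eq_mul [FiniteDimensional ℂ E] [Nontrivial E]
    (hcomm : ∀ α β, Commute (V α) (V β)) :
    ∃ ξ : E, ‖ξ‖ = 1 ∧ ∃ μ : ι → ℂ, ∀ α w, ⟪ξ, V α w⟫_ℂ = μ α * ⟪ξ, w⟫_ℂ := by
  obtain ⟨v, hv, hvν⟩ := Module.End.exists_common_eigenvector_s2 (fun α => LinearMap.adjoint (V α))
    fun α β => by simpa only [LinearMap.star_eq_adjoint] using (hcomm α β).star_star
  choose ν hν using hvν
  refine ⟨(‖v‖⁻¹ : ℂ) • v, norm_smul_inv_norm hv, fun α => conj (ν α), fun α w => ?_⟩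
  simp only [← LinearMap.adjoint_inner_left, map_smul, hν, inner_smul_left]
  ring

theorem sub_mul_inner_apply_eq_of_commute (hcomm : ∀ α β, Commute (V α) (V β)) {ξ e : E}
    (hξ : ‖ξ‖ = 1) (heξ : ⟪e, ξ⟫_ℂ = 0) {μ lam : ι → ℂ}
    (hμ : ∀ α w, ⟪ξ, V α w⟫_ℂ = μ α * ⟪ξ, w⟫_ℂ)
    (hlam_perp : ∀ α w, ⟪ξ, w⟫_ℂ = 0 → ⟪e, V α w⟫_ℂ = lam α * ⟪e, w⟫_ℂ) (α β : ι) :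
    (μ β - lam β) * ⟪e, V α ξ⟫_ℂ = (μ α - lam α) * ⟪e, V β ξ⟫_ℂ := by
  have hξξ : ⟪ξ, ξ⟫_ℂ = 1 := by simp [inner_self_eq_norm_sq_to_K, hξ]
  have hcomp : ∀ α β, ⟪e, V α (V β ξ)⟫_ℂ = μ β * ⟪e, V α ξ⟫_ℂ + lam α * ⟪e, V β ξ⟫_ℂ := by
    intro α β
    have hperp : ⟪ξ, V β ξ - μ β • ξ⟫_ℂ = 0 := by
      rw [inner_sub_right, inner_smul_right, hξξ, hμ, hξξ, mul_one, sub_self]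
    have := hlam_perp α _ hperp
    simp only [map_sub, map_smul, inner_sub_right, inner_smul_right, heξ] at this
    linear_combination this
  have hVV : V α (V β ξ) = V β (V α ξ) := LinearMap.congr_fun (hcomm α β).eq ξ
  linear_combination hcomp β α - hcomp α β + congrArg (⟪e, ·⟫_ℂ) hVV

variable [Fintype ι]

theorem inner_apply_eq_zero_of_kraus
    (hkraus : ∀ x y, ∑ α, ⟪V α x, V α y⟫_ℂ = ⟪x, y⟫_ℂ) (hcomm : ∀ α β, Commute (V α) (V β))
    {ξ e : E} (hξ : ‖ξ‖ = 1) (he : ‖e‖ = 1) (heξ : ⟪e, ξ⟫_ℂ = 0)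
    {μ lam : ι → ℂ} (hμ : ∀ α w, ⟪ξ, V α w⟫_ℂ = μ α * ⟪ξ, w⟫_ℂ)
    (hlam : ∀ α, V α e = lam α • e)
    (hlam_perp : ∀ α w, ⟪ξ, w⟫_ℂ = 0 → ⟪e, V α w⟫_ℂ = lam α * ⟪e, w⟫_ℂ) (α : ι) :
    ⟪e, V α ξ⟫_ℂ = 0 := by
  set b : ι → ℂ := fun α => ⟪e, V α ξ⟫_ℂ with hb
  have hee : ⟪e, e⟫_ℂ = 1 := by simp [inner_self_eq_norm_sq_to_K, he]
  have hξe : ⟪ξ, e⟫_ℂ = 0 := inner_eq_zero_symm.mp heξ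
  have hμξ : ∀ α, μ α = ⟪ξ, V α ξ⟫_ℂ := fun α => by
    rw [hμ, inner_self_eq_norm_sq_to_K, hξ]; simp
  have hl : ‖(WithLp.toLp 2 lam : EuclideanSpace ℂ ι)‖ = 1 := by
    have := hkraus e e
    simp only [hlam, inner_smul_left, inner_smul_right, hee, mul_one, RCLike.mul_conj] at this
    rw [← pow_eq_one_iff_of_nonneg (norm_nonneg _) two_ne_zero, EuclideanSpace.norm_sq_eq]
    exact RCLike.ofReal_injective (K := ℂ) (by simpa using this)
  have hlb : ⟪(WithLp.toLp 2 lam : EuclideanSpace ℂ ι), WithLp.toLp 2 b⟫_ℂ = 0 := by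
    have := hkraus e ξ
    simp only [hlam, inner_smul_left, heξ] at this
    simpa [PiLp.inner_apply, hb, mul_comm] using this
  have hμb : ‖(WithLp.toLp 2 μ : EuclideanSpace ℂ ι)‖ ^ 2 + ‖WithLp.toLp 2 b‖ ^ 2 ≤ 1 := by
    have hsum : ∑ α, ‖V α ξ‖ ^ 2 = 1 := by
      have := hkraus ξ ξ
      simp only [inner_self_eq_norm_sq_to_K, hξ] at this
      exact RCLike.ofReal_injective (K := ℂ) (by simpa using this)
    have hbessel : ∀ α, ‖μ α‖ ^ 2 + ‖b α‖ ^ 2 ≤ ‖V α ξ‖ ^ 2 := by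
      intro α
      have hon : Orthonormal ℂ ![ξ, e] := by simp [hξ, he, hξe]
      simpa [hμξ, hb] using hon.sum_inner_products_le (x := V α ξ) (s := Finset.univ)
    rw [EuclideanSpace.norm_sq_eq, EuclideanSpace.norm_sq_eq, ← Finset.sum_add_distrib, ← hsum]
    exact Finset.sum_le_sum fun α _ => by simpa using hbessel α
  suffices b = 0 from congrFun this α
  rcases eq_zero_or_exists_eq_smul_of_mul_eq_mul
      (sub_mul_inner_apply_eq_of_commute hcomm hξ heξ hμ hlam_perp) with h | ⟨c, hc⟩
  · exact h
  · have hc' : WithLp.toLp 2 μ - WithLp.toLp 2 lam =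
        c • (WithLp.toLp 2 b : EuclideanSpace ℂ ι) := by
      rw [← WithLp.toLp_sub, ← WithLp.toLp_smul]
      exact congrArg _ hc
    simpa using eq_zero_of_sub_eq_smul_of_inner_eq_zero hl hlb hμb hc'

theorem exists_orthonormalBasis_common_eigenvectors_of_kraus [FiniteDimensional ℂ E]
    (hkraus : ∀ x y, ∑ α, ⟪V α x, V α y⟫_ℂ = ⟪x, y⟫_ℂ) (hcomm : ∀ α β, Commute (V α) (V β)) :
    ∃ (d : ℕ) (b : OrthonormalBasis (Fin d) ℂ E) (lam : ι → Fin d → ℂ),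
      ∀ α j, V α (b j) = lam α j • b j := by
  induction hd : Module.finrank ℂ E using Nat.strong_induction_on generalizing E with
  | _ d ih =>
  rcases subsingleton_or_nontrivial E with hE | hE
  · exact ⟨_, stdOrthonormalBasis ℂ E, 0, fun α j => Subsingleton.elim _ _⟩
  obtain ⟨ξ, hξ, μ, hμ⟩ := exists_norm_eq_one_inner_apply_eq_mul hcomm
  set K := (ℂ ∙ ξ)ᗮ
  have hK α : Set.MapsTo (V α) K K := fun w hw => by
    rw [SetLike.mem_coe, Submodule.mem_orthogonal_singleton_iff_inner_right] at hw ⊢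
    rw [hμ, hw, mul_zero]
  have hKlt : Module.finrank ℂ K < d := hd ▸ Submodule.finrank_lt fun htop => by
    have hξK : ξ ∈ K := htop ▸ Submodule.mem_top
    simp [K, Submodule.mem_orthogonal_singleton_iff_inner_right, hξ] at hξK
  obtain ⟨d', e, lam, he⟩ := ih _ hKlt (V := fun α => (V α).restrict (hK α))
    (fun x y => by simp only [Submodule.coe_inner]; exact hkraus x y)
    (fun α β => LinearMap.restrict_commute (hcomm α β) _ _) rfl
  have heV α j : V α (e j) = lam α j • (e j : E) := congrArg Subtype.val (he α j)
  have heξ j : ⟪(e j : E), ξ⟫_ℂ = 0 :=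
    inner_eq_zero_symm.mp (Submodule.mem_orthogonal_singleton_iff_inner_right.mp (e j).2)
  have hperp α j : ⟪(e j : E), V α ξ⟫_ℂ = 0 :=
    inner_apply_eq_zero_of_kraus hkraus hcomm hξ (e.orthonormal.1 j) (heξ j) hμ
      (heV · j) (fun β w hw => e.inner_apply_of_apply_eq_smul (he β) j
        ⟨w, Submodule.mem_orthogonal_singleton_iff_inner_right.mpr hw⟩) α
  have hξV α : V α ξ = μ α • ξ := by
    have hmem : V α ξ - μ α • ξ ∈ K := by
      rw [Submodule.mem_orthogonal_singleton_iff_inner_right, inner_sub_right, inner_smul_right,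
        hμ, sub_self]
    have : (⟨_, hmem⟩ : K) = 0 := e.repr.map_eq_zero_iff.mp <| by
      ext j
      simp [OrthonormalBasis.repr_apply_apply, inner_sub_right, inner_smul_right, hperp, heξ]
    exact sub_eq_zero.mp (congrArg Subtype.val this)
  obtain ⟨b, hb⟩ := OrthonormalBasis.exists_coe_eq_cons hξ e
  refine ⟨d' + 1, b, fun α => Fin.cons (μ α) (lam α), fun α j => ?_⟩
  rw [hb]
  cases j using Fin.cases with
  | zero => simpa using hξV α
  | succ j => simpa using heV α j

end KrausFamily

theorem Matrix.exists_unitary_diagonal_of_kraus {ι κ : Type*} [Fintype ι] [Fintype κ]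
    [DecidableEq κ] {V : ι → Matrix κ κ ℂ} (hnorm : ∑ α, (V α)ᴴ * V α = 1)
    (hcomm : ∀ α β, V α * V β = V β * V α) :
    ∃ U ∈ unitaryGroup κ ℂ, ∃ lam : ι → κ → ℂ, ∀ α, V α = U * diagonal (lam α) * Uᴴ := by
  obtain ⟨d, b, lam, hb⟩ := exists_orthonormalBasis_common_eigenvectors_of_kraus
    (V := fun α => toEuclideanLin (V α))
    (fun x y => by
      simp_rw [← LinearMap.adjoint_inner_right, ← toEuclideanLin_conjTranspose_eq_adjoint,
        ← LinearMap.comp_apply, ← toLpLin_mul_same, ← inner_sum, ← LinearMap.sum_apply,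
        ← map_sum, hnorm, toLpLin_one, LinearMap.id_apply])
    (fun α β => by
      simp only [Commute, SemiconjBy, Module.End.mul_eq_comp, ← toLpLin_mul_same, hcomm])
  have hd : Fintype.card (Fin d) = Fintype.card κ := by
    rw [← Module.finrank_eq_card_basis b.toBasis, finrank_euclideanSpace]
  set σ := Fintype.equivOfCardEq hd
  set U := (EuclideanSpace.basisFun κ ℂ).toBasis.toMatrix (b.reindex σ)
  have hU : U ∈ unitaryGroup κ ℂ :=
    (EuclideanSpace.basisFun κ ℂ).toMatrix_orthonormalBasis_mem_unitary _
  refine ⟨U, hU, fun α => lam α ∘ σ.symm, fun α => ?_⟩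
  have hVU : V α * U = U * diagonal (lam α ∘ σ.symm) := by
    ext i j
    have := congrArg (fun x : EuclideanSpace ℂ κ => x i) (hb α (σ.symm j))
    rw [mul_diagonal, Matrix.mul_apply]
    simpa [U, Module.Basis.toMatrix_apply, toLpLin_apply, mulVec, dotProduct, mul_comm] using this
  calc V α = V α * U * Uᴴ := by
        rw [mul_assoc, ← star_eq_conjTranspose, Unitary.mul_star_self_of_mem hU, mul_one]
    _ = U * diagonal (lam α ∘ σ.symm) * Uᴴ := by rw [hVU]

theorem Matrix.diagonal_comp_mul_eq_mul_diagonal_comp {ι κ α R : Type*} [Fintype ι] [Fintype κ]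
    [DecidableEq ι] [DecidableEq κ] [CommRing R] [NoZeroDivisors R] {φ : α → R}
    (hφ : φ.Injective) {d : ι → α} {e : κ → α} {M : Matrix ι κ R}
    (h : diagonal (φ ∘ d) * M = M * diagonal (φ ∘ e)) (f : α → R) :
    diagonal (f ∘ d) * M = M * diagonal (f ∘ e) := by
  ext i j
  have hij := congrFun₂ h i j
  simp only [diagonal_mul, mul_diagonal, Function.comp_apply] at hij ⊢
  rcases eq_or_ne (M i j) 0 with h0 | h0
  · simp [h0]
  · rw [hφ (mul_right_cancel₀ h0 (hij.trans (mul_comm _ _))), mul_comm]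

section hermitianApply

variable {n : ℕ} {N : Matrix (Fin n) (Fin n) ℂ}

theorem hermitianApply_mul (hN : N.IsHermitian) (f g : ℝ → ℂ) :
    hermitianApply hN f * hermitianApply hN g = hermitianApply hN (f * g) := by
  have hW : (hN.eigenvectorUnitary : Matrix (Fin n) (Fin n) ℂ)ᴴ * hN.eigenvectorUnitary = 1 :=
    Unitary.coe_star_mul_self _
  simp only [hermitianApply, mul_assoc]
  rw [← mul_assoc _ (hN.eigenvectorUnitary : Matrix (Fin n) (Fin n) ℂ), hW, one_mul,
    ← mul_assoc (diagonal _), diagonal_mul_diagonal]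
  rfl

theorem hermitianApply_eq_of_eq_unitary_diagonal (hN : N.IsHermitian)
    {U : Matrix (Fin n) (Fin n) ℂ} (hU : U ∈ unitaryGroup (Fin n) ℂ) {g : Fin n → ℝ}
    (hNU : N = U * diagonal (Complex.ofReal ∘ g) * Uᴴ) (f : ℝ → ℂ) :
    hermitianApply hN f = U * diagonal (f ∘ g) * Uᴴ := by
  set W := (hN.eigenvectorUnitary : Matrix (Fin n) (Fin n) ℂ)
  set D := diagonal (Complex.ofReal ∘ hN.eigenvalues)
  have hW : W ∈ unitaryGroup (Fin n) ℂ := hN.eigenvectorUnitary.2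
  have hNW : N = W * D * Wᴴ := hN.spectral_theorem
  have hUU : Uᴴ * U = 1 := Unitary.star_mul_self_of_mem hU
  have hUU' : U * Uᴴ = 1 := Unitary.mul_star_self_of_mem hU
  have hWW : Wᴴ * W = 1 := Unitary.star_mul_self_of_mem hW
  have hWW' : W * Wᴴ = 1 := Unitary.mul_star_self_of_mem hW
  set M := Uᴴ * W
  have hM : diagonal (Complex.ofReal ∘ g) * M = M * D :=
    calc diagonal (Complex.ofReal ∘ g) * M = Uᴴ * N * W := by
          rw [hNU]; simp only [M, ← mul_assoc, hUU, one_mul]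
      _ = M * D := by
          rw [hNW]; simp only [M, mul_assoc, hWW, mul_one]
  have hUM : U * M = W := by rw [← mul_assoc, hUU', one_mul]
  have hMW : M * Wᴴ = Uᴴ := by rw [mul_assoc, hWW', mul_one]
  calc hermitianApply hN f = U * M * diagonal (f ∘ hN.eigenvalues) * Wᴴ := by
        rw [hUM]; rfl
    _ = U * diagonal (f ∘ g) * Uᴴ := by
        rw [mul_assoc U, ← diagonal_comp_mul_eq_mul_diagonal_comp Complex.ofReal_injective hM,
          ← hMW]
        simp only [mul_assoc]

end hermitianApply

/-- For Kraus operators, being functions of a single Hermitian matrix (non-demolition,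
Condition A) is equivalent to mutual commutation (Condition B). -/
theorem nondemolition_iff_commuting (n m : ℕ)
    (V : Fin m → Matrix (Fin n) (Fin n) ℂ)
    (hnorm : ∑ α, (V α)ᴴ * V α = 1) :
    (∃ N : Matrix (Fin n) (Fin n) ℂ, ∃ hN : N.IsHermitian, ∃ f : Fin m → ℝ → ℂ,
        ∀ α, V α = hermitianApply hN (f α)) ↔
      (∀ α β, V α * V β = V β * V α) := by
  constructor
  · rintro ⟨N, hN, f, hf⟩ α β
    rw [hf, hf, hermitianApply_mul, hermitianApply_mul, mul_comm]
  · intro hcomm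
    obtain ⟨U, hU, lam, hV⟩ := exists_unitary_diagonal_of_kraus hnorm hcomm
    set g : Fin n → ℝ := fun i => (i : ℝ)
    have hg : g.Injective := Nat.cast_injective.comp Fin.val_injective
    have hN : (U * diagonal (Complex.ofReal ∘ g) * Uᴴ).IsHermitian :=
      isHermitian_mul_mul_conjTranspose U
        (isHermitian_diagonal_of_self_adjoint _ (funext fun i => Complex.conj_ofReal _))
    refine ⟨_, hN, fun α => Function.extend g (lam α) 0, fun α => ?_⟩
    have hfg : Function.extend g (lam α) 0 ∘ g = lam α := funext (hg.extend_apply (lam α) 0)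
    rw [hermitianApply_eq_of_eq_unitary_diagonal hN hU rfl, hfg, hV α]
end

section
/- Let A_1, ..., A_m be complex n×n matrices satisfying A_1* A_1 + ... + A_m* A_m = Id, and define the linear map Φ on n×n matrices by Φ(X) = Σ_α A_α* X A_α. Then for every index β one has the identity Φ(A_β A_β*) − A_β Φ(A_β*) − Φ(A_β) A_β* + A_β A_β* = Σ_α [A_β*, A_α]* [A_β*, A_α], where [X, Y] = XY − YX denotes the commutator. -/
open Matrix

/-- The algebraic identity
`Φ(A_β A_β*) − A_β Φ(A_β*) − Φ(A_β) A_β* + A_β A_β* = Σ_α [A_β*, A_α]* [A_β*, A_α]`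
for `Φ(X) = Σ_α A_α* X A_α` with normalized Kraus operators. -/
theorem kraus_commutator_identity (n m : ℕ)
    (A : Fin m → Matrix (Fin n) (Fin n) ℂ)
    (hnorm : ∑ α, (A α)ᴴ * A α = 1)
    (Φ : Matrix (Fin n) (Fin n) ℂ → Matrix (Fin n) (Fin n) ℂ)
    (hΦ : ∀ X, Φ X = ∑ α, (A α)ᴴ * X * A α) (β : Fin m) :
    Φ (A β * (A β)ᴴ) - A β * Φ ((A β)ᴴ) - Φ (A β) * (A β)ᴴ + A β * (A β)ᴴ =
      ∑ α, ((A β)ᴴ * A α - A α * (A β)ᴴ)ᴴ * ((A β)ᴴ * A α - A α * (A β)ᴴ) := by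
  have key : A β * (A β)ᴴ = ∑ α, A β * ((A α)ᴴ * A α) * (A β)ᴴ := by
    rw [← Finset.sum_mul, ← Finset.mul_sum, hnorm, mul_one]
  nth_rewrite 2 [key]
  simp only [hΦ, Finset.mul_sum, Finset.sum_mul]
  rw [← Finset.sum_sub_distrib, ← Finset.sum_sub_distrib, ← Finset.sum_add_distrib]
  refine Finset.sum_congr rfl fun α _ => ?_
  simp only [conjTranspose_sub, conjTranspose_mul, conjTranspose_conjTranspose]
  noncomm_ring
end

section
/- Let A_1, ..., A_m be mutually commuting complex n×n matrices satisfying A_1* A_1 + ... + A_m* A_m = Id, and suppose there exists a positive definite (full rank positive semidefinite) matrix ρ such that Σ_α A_α ρ A_α* = ρ. Then every A_α is normal. -/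
open Matrix
open scoped ComplexOrder

/-!
Let `Φ = krausMap A`, `Φ(X) = ∑ A_αᴴ X A_α`, the unital trace-dual of `ρ ↦ ∑ A_α ρ A_αᴴ`.
For a fixed point `X` of `Φ`, the commutators `C_α = X A_α - A_α X` satisfy
`∑ C_αᴴ C_α = Φ(XᴴX) - XᴴX`, whose trace against the stationary state `ρ` vanishes. Each term
`tr(C_α ρ C_αᴴ)` is nonnegative, so all vanish, and faithfulness of `ρ` forces `C_α = 0`: the
fixed points of `Φ` commute with every `A_α`. When the `A_α` commute, `A_βᴴ` is such a fixed
point, and commuting with `A_β` is exactly normality of `A_β`.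
-/

namespace Matrix

variable {ι n 𝕜 : Type*} [Fintype ι] [Fintype n] [RCLike 𝕜]

def krausMap (A : ι → Matrix n n 𝕜) (X : Matrix n n 𝕜) : Matrix n n 𝕜 :=
  ∑ α, (A α)ᴴ * X * A α

lemma krausMap_one [DecidableEq n] (A : ι → Matrix n n 𝕜) :
    krausMap A 1 = ∑ α, (A α)ᴴ * A α := by
  simp only [krausMap, Matrix.mul_one]

lemma krausMap_conjTranspose (A : ι → Matrix n n 𝕜) (X : Matrix n n 𝕜) :
    krausMap A Xᴴ = (krausMap A X)ᴴ := by
  simp only [krausMap, conjTranspose_sum, conjTranspose_mul, conjTranspose_conjTranspose,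
    Matrix.mul_assoc]

lemma krausMap_eq_mul_krausMap_one [DecidableEq n] (A : ι → Matrix n n 𝕜) {Y : Matrix n n 𝕜}
    (hY : ∀ α, (A α)ᴴ * Y = Y * (A α)ᴴ) : krausMap A Y = Y * krausMap A 1 := by
  simp only [krausMap, Matrix.mul_one, Finset.mul_sum, hY, Matrix.mul_assoc]

lemma trace_mul_krausMap (A : ι → Matrix n n 𝕜) (ρ Y : Matrix n n 𝕜) :
    (ρ * krausMap A Y).trace = ((∑ α, A α * ρ * (A α)ᴴ) * Y).trace := by
  simp only [krausMap, Finset.mul_sum, Finset.sum_mul, trace_sum]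
  refine Finset.sum_congr rfl fun α _ => ?_
  rw [← Matrix.mul_assoc, ← Matrix.mul_assoc, trace_mul_comm]
  simp only [Matrix.mul_assoc]

lemma sum_commutator_conjTranspose_mul_self [DecidableEq n] (A : ι → Matrix n n 𝕜)
    (X : Matrix n n 𝕜) :
    ∑ α, (X * A α - A α * X)ᴴ * (X * A α - A α * X) =
      krausMap A (Xᴴ * X) - krausMap A Xᴴ * X - Xᴴ * krausMap A X + Xᴴ * krausMap A 1 * X := by
  simp only [krausMap, conjTranspose_sub, conjTranspose_mul, Matrix.sub_mul, Matrix.mul_sub,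
    Finset.sum_sub_distrib, Finset.sum_mul, Finset.mul_sum, Matrix.mul_one, Matrix.mul_assoc]
  abel

lemma sum_commutator_conjTranspose_mul_self_of_krausMap_eq_self [DecidableEq n]
    {A : ι → Matrix n n 𝕜} (hA : krausMap A 1 = 1) {X : Matrix n n 𝕜} (hX : krausMap A X = X) :
    ∑ α, (X * A α - A α * X)ᴴ * (X * A α - A α * X) = krausMap A (Xᴴ * X) - Xᴴ * X := by
  rw [sum_commutator_conjTranspose_mul_self, krausMap_conjTranspose, hX, hA, Matrix.mul_one]
  abel

lemma PosDef.eq_zero_of_mul_mul_conjTranspose_eq_zero {m : Type*} [Fintype m] {ρ : Matrix n n 𝕜}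
    (hρ : ρ.PosDef) {C : Matrix m n 𝕜} (h : C * ρ * Cᴴ = 0) : C = 0 := by
  rw [← conjTranspose_eq_zero]
  refine ext_iff_mulVec.mpr fun x => ?_
  rw [zero_mulVec]
  by_contra hx
  have hpos := hρ.dotProduct_mulVec_pos hx
  rw [star_mulVec, conjTranspose_conjTranspose, dotProduct_mulVec, vecMul_vecMul,
    ← dotProduct_mulVec, mulVec_mulVec, h, zero_mulVec, dotProduct_zero] at hpos
  exact lt_irrefl 0 hpos

theorem commute_of_krausMap_eq_self [DecidableEq n] {A : ι → Matrix n n 𝕜}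
    (hA : krausMap A 1 = 1) {ρ : Matrix n n 𝕜} (hρ : ρ.PosDef)
    (hstat : ∑ α, A α * ρ * (A α)ᴴ = ρ) {X : Matrix n n 𝕜} (hX : krausMap A X = X) (α : ι) :
    X * A α = A α * X := by
  set C := fun α => X * A α - A α * X
  have hpsd : ∀ α, (C α * ρ * (C α)ᴴ).PosSemidef := fun α =>
    hρ.posSemidef.mul_mul_conjTranspose_same _
  have htrace : ∑ α, (C α * ρ * (C α)ᴴ).trace = 0 := calc
    ∑ α, (C α * ρ * (C α)ᴴ).trace = (ρ * ∑ α, (C α)ᴴ * C α).trace := by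
      rw [Finset.mul_sum, trace_sum]
      refine Finset.sum_congr rfl fun α _ => ?_
      rw [Matrix.mul_assoc, trace_mul_comm, Matrix.mul_assoc]
    _ = 0 := by
      rw [sum_commutator_conjTranspose_mul_self_of_krausMap_eq_self hA hX, Matrix.mul_sub,
        trace_sub, trace_mul_krausMap, hstat, sub_self]
  have hα := (Finset.sum_eq_zero_iff_of_nonneg fun α _ => (hpsd α).trace_nonneg).mp htrace α
    (Finset.mem_univ α)
  exact sub_eq_zero.mp (hρ.eq_zero_of_mul_mul_conjTranspose_eq_zero
    ((hpsd α).trace_eq_zero_iff.mp hα))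

end Matrix

/-- Commuting Kraus operators admitting a faithful (positive definite) stationary state
are normal. -/
theorem commuting_kraus_with_faithful_state_normal (n m : ℕ)
    (A : Fin m → Matrix (Fin n) (Fin n) ℂ)
    (hcomm : ∀ α β, A α * A β = A β * A α)
    (hnorm : ∑ α, (A α)ᴴ * A α = 1)
    (ρ : Matrix (Fin n) (Fin n) ℂ) (hρ : ρ.PosDef)
    (hstat : ∑ α, A α * ρ * (A α)ᴴ = ρ) :
    ∀ α, A α * (A α)ᴴ = (A α)ᴴ * A α := by
  intro β
  have hunital : krausMap A 1 = 1 := by rw [krausMap_one, hnorm]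
  have hfix : krausMap A (A β)ᴴ = (A β)ᴴ := by
    rw [krausMap_eq_mul_krausMap_one A fun α => ?_, hunital, Matrix.mul_one]
    rw [← conjTranspose_mul, ← conjTranspose_mul, hcomm]
  exact (commute_of_krausMap_eq_self hunital hρ hstat hfix β).symm
end

section
/- Let V_1, ..., V_m be mutually commuting complex n×n matrices satisfying V_1* V_1 + ... + V_m* V_m = Id, and let ρ be a positive semidefinite matrix with Σ_α V_α ρ V_α* = ρ. Then Σ_α tr( ρ · [V_β*, V_α]* [V_β*, V_α] ) = 0 for every index β. -/
open Matrix
open scoped ComplexOrder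

/-- For commuting Kraus operators with a stationary state `ρ`, the trace of `ρ` against the
sum of the positive matrices `|[V_β*, V_α]|²` vanishes. -/
theorem kraus_stationary_trace_commutator_zero (n m : ℕ)
    (V : Fin m → Matrix (Fin n) (Fin n) ℂ)
    (hcomm : ∀ α β, V α * V β = V β * V α)
    (hnorm : ∑ α, (V α)ᴴ * V α = 1)
    (ρ : Matrix (Fin n) (Fin n) ℂ) (hρ : ρ.PosSemidef)
    (hstat : ∑ α, V α * ρ * (V α)ᴴ = ρ) (β : Fin m) :
    ∑ α, Matrix.trace (ρ * (((V β)ᴴ * V α - V α * (V β)ᴴ)ᴴ *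
        ((V β)ᴴ * V α - V α * (V β)ᴴ))) = 0 := by
  -- adjoints commute as well
  have hadj : ∀ α : Fin m, (V α)ᴴ * (V β)ᴴ = (V β)ᴴ * (V α)ᴴ := by
    intro α
    have := congrArg Matrix.conjTranspose (hcomm β α)
    simpa [Matrix.conjTranspose_mul] using this
  have hswap : ∀ (α : Fin m) (x : Matrix (Fin n) (Fin n) ℂ),
      V β * (V α * x) = V α * (V β * x) := by
    intro α x
    rw [← mul_assoc, ← hcomm α β, mul_assoc]
  have hadjswap : ∀ (α : Fin m) (x : Matrix (Fin n) (Fin n) ℂ),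
      (V α)ᴴ * ((V β)ᴴ * x) = (V β)ᴴ * ((V α)ᴴ * x) := by
    intro α x
    rw [← mul_assoc, hadj α, mul_assoc]
  have key : ∀ α : Fin m,
      Matrix.trace (ρ * (((V β)ᴴ * V α - V α * (V β)ᴴ)ᴴ *
          ((V β)ᴴ * V α - V α * (V β)ᴴ)))
      = Matrix.trace (V α * ρ * (V α)ᴴ * (V β * (V β)ᴴ))
        - Matrix.trace (ρ * (((V α)ᴴ * V α) * (V β * (V β)ᴴ)))
        - Matrix.trace (ρ * ((V β * (V β)ᴴ) * ((V α)ᴴ * V α)))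
        + Matrix.trace (ρ * (V β * (((V α)ᴴ * V α) * (V β)ᴴ))) := by
    intro α
    have e : (((V β)ᴴ * V α - V α * (V β)ᴴ)ᴴ * ((V β)ᴴ * V α - V α * (V β)ᴴ))
        = (V α)ᴴ * ((V β * (V β)ᴴ) * V α)
          - ((V α)ᴴ * V α) * (V β * (V β)ᴴ)
          - (V β * (V β)ᴴ) * ((V α)ᴴ * V α)
          + V β * (((V α)ᴴ * V α) * (V β)ᴴ) := by
      simp only [Matrix.conjTranspose_sub, Matrix.conjTranspose_mul,
        Matrix.conjTranspose_conjTranspose, sub_mul, mul_sub]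
      simp only [mul_assoc]
      rw [hswap α ((V β)ᴴ), hadjswap α (V α)]
      abel
    rw [e]
    have tcyc : Matrix.trace (ρ * ((V α)ᴴ * ((V β * (V β)ᴴ) * V α)))
        = Matrix.trace (V α * ρ * (V α)ᴴ * (V β * (V β)ᴴ)) := by
      rw [show ρ * ((V α)ᴴ * ((V β * (V β)ᴴ) * V α))
          = (ρ * (V α)ᴴ * (V β * (V β)ᴴ)) * V α by noncomm_ring,
        Matrix.trace_mul_comm]
      noncomm_ring
    simp only [mul_add, mul_sub, Matrix.trace_add, Matrix.trace_sub]
    rw [tcyc]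
  rw [Finset.sum_congr rfl fun α _ => key α]
  rw [Finset.sum_add_distrib, Finset.sum_sub_distrib, Finset.sum_sub_distrib]
  have s1 : ∑ α : Fin m, Matrix.trace (V α * ρ * (V α)ᴴ * (V β * (V β)ᴴ))
      = Matrix.trace (ρ * (V β * (V β)ᴴ)) := by
    rw [← Matrix.trace_sum, ← Finset.sum_mul, hstat]
  have s2 : ∑ α : Fin m, Matrix.trace (ρ * (((V α)ᴴ * V α) * (V β * (V β)ᴴ)))
      = Matrix.trace (ρ * (V β * (V β)ᴴ)) := by
    rw [← Matrix.trace_sum]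
    simp only [← Finset.mul_sum, ← Finset.sum_mul, hnorm, one_mul]
  have s3 : ∑ α : Fin m, Matrix.trace (ρ * ((V β * (V β)ᴴ) * ((V α)ᴴ * V α)))
      = Matrix.trace (ρ * (V β * (V β)ᴴ)) := by
    rw [← Matrix.trace_sum]
    simp only [← Finset.mul_sum, hnorm, mul_one]
  have s4 : ∑ α : Fin m, Matrix.trace (ρ * (V β * (((V α)ᴴ * V α) * (V β)ᴴ)))
      = Matrix.trace (ρ * (V β * (V β)ᴴ)) := by
    rw [← Matrix.trace_sum]
    simp only [← Finset.mul_sum, ← Finset.sum_mul, hnorm, one_mul]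
  rw [s1, s2, s3, s4]
  ring
end

section
/- Let A_α, B_α, C_α (α = 1,...,m) be complex matrices of sizes k×k, k×l, and l×l respectively, satisfying: (1) Σ_α A_α* A_α = Id, (2) Σ_α A_α* B_α = 0, (3) A_α B_β + B_α C_β = A_β B_α + B_β C_α for all α, β, and (4) A_β* A_α = A_α A_β* for all α, β. Then B_β = Σ_α A_α* B_β C_α for every β. -/
open Matrix

/-- Block computation: under the normalization and commutation relations for the blocks of
upper-triangular Kraus operators, the off-diagonal blocks satisfy
`B_β = Σ_α A_α* B_β C_α`. -/
theorem offdiagonal_block_identity (k l m : ℕ)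
    (A : Fin m → Matrix (Fin k) (Fin k) ℂ)
    (B : Fin m → Matrix (Fin k) (Fin l) ℂ)
    (C : Fin m → Matrix (Fin l) (Fin l) ℂ)
    (h1 : ∑ α, (A α)ᴴ * A α = 1)
    (h2 : ∑ α, (A α)ᴴ * B α = 0)
    (h3 : ∀ α β, A α * B β + B α * C β = A β * B α + B β * C α)
    (h4 : ∀ α β, (A β)ᴴ * A α = A α * (A β)ᴴ) :
    ∀ β, B β = ∑ α, (A α)ᴴ * B β * C α := by
  intro β
  have e1 : ∑ α, (A α)ᴴ * (A α * B β + B α * C β) = B β := by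
    simp only [Matrix.mul_add, ← Matrix.mul_assoc]
    rw [Finset.sum_add_distrib, ← Matrix.sum_mul, ← Matrix.sum_mul, h1, h2]
    simp
  have e2 : ∑ α, (A α)ᴴ * (A β * B α + B β * C α) = ∑ α, (A α)ᴴ * B β * C α := by
    simp only [Matrix.mul_add, ← Matrix.mul_assoc]
    rw [Finset.sum_add_distrib]
    have hz : ∑ α, (A α)ᴴ * A β * B α = 0 := by
      have h : ∀ α, (A α)ᴴ * A β * B α = A β * ((A α)ᴴ * B α) := fun α => by
        rw [h4 β α, Matrix.mul_assoc]
      simp_rw [h]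
      rw [← Matrix.mul_sum, h2, Matrix.mul_zero]
    rw [hz, zero_add]
  calc B β = ∑ α, (A α)ᴴ * (A α * B β + B α * C β) := e1.symm
    _ = ∑ α, (A α)ᴴ * (A β * B α + B β * C α) := by
        exact Finset.sum_congr rfl fun α _ => by rw [h3 α β]
    _ = ∑ α, (A α)ᴴ * B β * C α := e2
end

section
/- Let A_α, B_α, C_α (α = 1,...,m) be complex matrices of sizes k×k, k×l, l×l, set V_α = [[A_α, B_α],[0, C_α]] as block upper-triangular (k+l)×(k+l) matrices, and define Φ(X) = Σ_α V_α* X V_α and Φ_D(Y) = Σ_α C_α* Y C_α. Fix β and suppose B_β = Σ_α A_α* B_β C_α. Then for every l×l matrix Y, Φ( [[0, B_β],[0, Y]] ) = [[0, B_β],[0, Φ_D(Y) + Σ_α B_α* B_β B_α]]. Consequently, if the spectral radius of Φ_D is strictly less than 1, then X = [[0, B_β],[0, X_D]] with X_D = Σ_{n≥0} Φ_Dⁿ(Σ_α B_α* B_β B_α) is a well-defined fixed point of Φ, i.e., Φ(X) = X. -/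
/-!
For a block upper-triangular `V = [[A, B], [0, C]]` one has
`V* [[0, E], [0, Y]] V = [[0, A* E C], [0, B* E C + C* Y C]]`; summing over `α` with `E = B_β`,
the hypothesis on `B_β` makes the upper-right block reproduce itself. For the fixed point,
Gelfand's formula turns spectral radius `< 1` into `‖Φ_Dⁿ‖ ≤ cⁿ` for some `c < 1` and all large
`n`, so the Neumann series `X_D` converges, and shifting its index gives
`X_D = Φ_D(X_D) + Σ_α B_α* B_β C_α`.
-/

open Matrix Filter
open scoped NNReal

section NeumannSeries

variable {A : Type*} [NormedRing A] [NormedAlgebra ℂ A] [CompleteSpace A]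

theorem eventually_nnnorm_pow_lt_of_spectralRadius_lt {a : A} {c : ℝ≥0}
    (h : spectralRadius ℂ a < c) : ∀ᶠ n : ℕ in atTop, ‖a ^ n‖₊ < c ^ n := by
  have hgelfand := spectrum.pow_nnnorm_pow_one_div_tendsto_nhds_spectralRadius a
  filter_upwards [hgelfand.eventually_lt_const h, eventually_ge_atTop 1] with n hroot hn
  rw [one_div, ENNReal.rpow_inv_lt_iff (by positivity), ENNReal.rpow_natCast] at hroot
  exact_mod_cast hroot

theorem summable_pow_of_spectralRadius_lt_one {a : A} (h : spectralRadius ℂ a < 1) :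
    Summable fun n : ℕ => a ^ n := by
  obtain ⟨c, hac, hc1⟩ := ENNReal.lt_iff_exists_nnreal_btwn.1 h
  have hgeom := summable_geometric_of_lt_one c.2 (by exact_mod_cast hc1)
  refine hgeom.of_norm_bounded_eventually_nat ?_
  filter_upwards [eventually_nnnorm_pow_lt_of_spectralRadius_lt hac] with n hn
  exact_mod_cast hn.le

end NeumannSeries

theorem Module.End.spectralRadius_toContinuousLinearMap_lt_one {E : Type*}
    [NormedAddCommGroup E] [NormedSpace ℂ E] [FiniteDimensional ℂ E] {f : Module.End ℂ E}
    (h : ∀ μ : ℂ, f.HasEigenvalue μ → ‖μ‖ < 1) :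
    spectralRadius ℂ (Module.End.toContinuousLinearMap E f) < 1 := by
  rcases subsingleton_or_nontrivial E with hE | hE
  · simp [spectralRadius, spectrum.of_subsingleton]
  refine spectrum.spectralRadius_lt_of_forall_lt _ fun μ hμ => ?_
  rw [AlgEquiv.spectrum_eq, ← Module.End.hasEigenvalue_iff_mem_spectrum] at hμ
  exact_mod_cast h μ hμ

theorem Module.End.summable_pow_apply_of_forall_hasEigenvalue_norm_lt_one {E : Type*}
    [NormedAddCommGroup E] [NormedSpace ℂ E] [FiniteDimensional ℂ E] {f : Module.End ℂ E}
    (h : ∀ μ : ℂ, f.HasEigenvalue μ → ‖μ‖ < 1) (x : E) :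
    Summable fun n : ℕ => (f ^ n) x := by
  have := FiniteDimensional.complete ℂ E
  have hT := (summable_pow_of_spectralRadius_lt_one
    (spectralRadius_toContinuousLinearMap_lt_one h)).mapL (ContinuousLinearMap.apply ℂ E x)
  convert hT using 2 with n
  rw [ContinuousLinearMap.apply_apply, ← map_pow]
  rfl

theorem LinearMap.apply_tsum_pow_apply_add {R M : Type*} [Semiring R] [AddCommGroup M]
    [Module R M] [TopologicalSpace M] [IsTopologicalAddGroup M] [T2Space M] {f : M →ₗ[R] M}
    (hf : Continuous f) {x : M} (h : Summable fun n : ℕ => (f ^ n) x) :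
    f (∑' n : ℕ, (f ^ n) x) + x = ∑' n : ℕ, (f ^ n) x := by
  have hshift : f (∑' n : ℕ, (f ^ n) x) = ∑' n : ℕ, (f ^ (n + 1)) x := by
    rw [← (h.hasSum.map f hf).tsum_eq]
    simp only [Function.comp_def, pow_succ', Module.End.mul_apply]
  rw [hshift, h.tsum_eq_zero_add, pow_zero, add_comm, Module.End.one_apply]

theorem Matrix.fromBlocks_sum {R n o l m ι : Type*} [AddCommMonoid R] (s : Finset ι)
    (A : ι → Matrix n l R) (B : ι → Matrix n m R) (C : ι → Matrix o l R)
    (D : ι → Matrix o m R) :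
    ∑ i ∈ s, fromBlocks (A i) (B i) (C i) (D i) =
      fromBlocks (∑ i ∈ s, A i) (∑ i ∈ s, B i) (∑ i ∈ s, C i) (∑ i ∈ s, D i) := by
  ext (i | i) (j | j) <;> simp [Matrix.sum_apply]

theorem Matrix.conjTranspose_fromBlocks_zero₂₁_mul_fromBlocks_zero_mul {R k l : Type*}
    [Fintype k] [Fintype l] [Semiring R] [StarRing R]
    (A : Matrix k k R) (B E : Matrix k l R) (C Y : Matrix l l R) :
    (fromBlocks A B 0 C)ᴴ * fromBlocks 0 E 0 Y * fromBlocks A B 0 C =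
      fromBlocks 0 (Aᴴ * E * C) 0 (Bᴴ * E * C + Cᴴ * Y * C) := by
  simp [fromBlocks_conjTranspose, fromBlocks_multiply, Matrix.add_mul, Matrix.mul_assoc]

attribute [local instance] Matrix.normedAddCommGroup Matrix.normedSpace

/-- If `B_β = Σ_α A_α* B_β C_α`, then
`Φ([[0, B_β],[0, Y]]) = [[0, B_β],[0, Φ_D(Y) + Σ_α B_α* B_β C_α]]` for every `Y`;
consequently, if the spectral radius of `Φ_D` (the largest modulus of its complex
eigenvalues) is strictly less than `1`, then
`X = [[0, B_β],[0, Σ_{n≥0} Φ_Dⁿ(Σ_α B_α* B_β C_α)]]` is a well-defined fixed point of `Φ`.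
(Note: the paper writes the lower-right term as `Σ_α B_α* B_β B_α`, which is dimensionally
inconsistent for `k ≠ l`; the block multiplication `V_α* X V_α` yields `Σ_α B_α* B_β C_α`.) -/
theorem block_fixed_point (k l m : ℕ)
    (A : Fin m → Matrix (Fin k) (Fin k) ℂ)
    (B : Fin m → Matrix (Fin k) (Fin l) ℂ)
    (C : Fin m → Matrix (Fin l) (Fin l) ℂ)
    (V : Fin m → Matrix (Fin k ⊕ Fin l) (Fin k ⊕ Fin l) ℂ)
    (hV : ∀ α, V α = Matrix.fromBlocks (A α) (B α) 0 (C α))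
    (Φ : Matrix (Fin k ⊕ Fin l) (Fin k ⊕ Fin l) ℂ → Matrix (Fin k ⊕ Fin l) (Fin k ⊕ Fin l) ℂ)
    (hΦ : ∀ X, Φ X = ∑ α, (V α)ᴴ * X * V α)
    (ΦD : Module.End ℂ (Matrix (Fin l) (Fin l) ℂ))
    (hΦD : ∀ Y, ΦD Y = ∑ α, (C α)ᴴ * Y * C α)
    (β : Fin m)
    (hB : B β = ∑ α, (A α)ᴴ * B β * C α) :
    (∀ Y : Matrix (Fin l) (Fin l) ℂ,
      Φ (Matrix.fromBlocks 0 (B β) 0 Y) =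
        Matrix.fromBlocks 0 (B β) 0 (ΦD Y + ∑ α, (B α)ᴴ * B β * C α)) ∧
    ((∀ μ : ℂ, Module.End.HasEigenvalue ΦD μ → ‖μ‖ < 1) →
      Summable (fun n : ℕ => (ΦD ^ n) (∑ α, (B α)ᴴ * B β * C α)) ∧
      Φ (Matrix.fromBlocks 0 (B β) 0 (∑' n : ℕ, (ΦD ^ n) (∑ α, (B α)ᴴ * B β * C α))) =
        Matrix.fromBlocks 0 (B β) 0 (∑' n : ℕ, (ΦD ^ n) (∑ α, (B α)ᴴ * B β * C α))) := by
  have hblock (Y : Matrix (Fin l) (Fin l) ℂ) :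
      Φ (fromBlocks 0 (B β) 0 Y) = fromBlocks 0 (B β) 0 (ΦD Y + ∑ α, (B α)ᴴ * B β * C α) := by
    simp only [hΦ, hV, conjTranspose_fromBlocks_zero₂₁_mul_fromBlocks_zero_mul, fromBlocks_sum,
      Finset.sum_const_zero, ← hB, hΦD, Finset.sum_add_distrib, add_comm]
  refine ⟨hblock, fun hspec => ?_⟩
  have hsum := ΦD.summable_pow_apply_of_forall_hasEigenvalue_norm_lt_one hspec
    (∑ α, (B α)ᴴ * B β * C α)
  have hfix :=
    LinearMap.apply_tsum_pow_apply_add (LinearMap.continuous_of_finiteDimensional ΦD) hsum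
  exact ⟨hsum, by rw [hblock, hfix]⟩
end
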